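/- arXiv:math/0506444 — 2 statements merged into one kernel-verified Lean document; each statement's English description precedes it below -/
import Mathlib

section
/- Let g ≥ 2, n ≥ 1, and let Γ be the universal central extension of the genus-g surface group. The quotient space 𝓡(Γ, GL(n,ℂ)) of the set of all semisimple homomorphisms Γ → GL(n,ℂ) (with the subspace topology induced from GL(n,ℂ)^{2g+1} via the images of the generators) by the simultaneous conjugation action of GL(n,ℂ), equipped with the quotient topology, is a Hausdorff topological space. -/
open Matrix
open scoped commutatorElement

/-- Generators of the universal central extension `Γ` of a genus-`g` surface group:
`A i`, `B i` for `i < g`, and the central element `J`. -/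
inductive SurfaceGen (g : ℕ) : Type
  | A : Fin g → SurfaceGen g
  | B : Fin g → SurfaceGen g
  | J : SurfaceGen g

/-- The relations of `Γ`: `(∏ i, [Aᵢ, Bᵢ]) J⁻¹`, and `[Aᵢ, J]`, `[Bᵢ, J]` for all `i`. -/
def surfaceRels (g : ℕ) : Set (FreeGroup (SurfaceGen g)) :=
  {(List.ofFn fun i : Fin g =>
      ⁅FreeGroup.of (SurfaceGen.A i), FreeGroup.of (SurfaceGen.B i)⁆).prod *
    (FreeGroup.of (SurfaceGen.J : SurfaceGen g))⁻¹} ∪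
  (⋃ i : Fin g,
    {⁅FreeGroup.of (SurfaceGen.A i), FreeGroup.of (SurfaceGen.J : SurfaceGen g)⁆,
     ⁅FreeGroup.of (SurfaceGen.B i), FreeGroup.of (SurfaceGen.J : SurfaceGen g)⁆})

/-- The universal central extension `Γ` of the fundamental group of a closed oriented
genus-`g` surface, given by the presentation above. -/
abbrev SurfaceGamma (g : ℕ) : Type := PresentedGroup (surfaceRels g)

/-- A representation `ρ : Γ → GL(n, ℂ)` is semisimple if every `ρ`-invariant subspace of `ℂⁿ`
has a `ρ`-invariant complement, i.e. `ℂⁿ` is a semisimple module under the induced action. -/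
def IsSemisimpleRep {g n : ℕ} (ρ : SurfaceGamma g →* GL (Fin n) ℂ) : Prop :=
  ∀ W : Submodule ℂ (Fin n → ℂ),
    (∀ γ : SurfaceGamma g, W.map (Matrix.mulVecLin (ρ γ : Matrix (Fin n) (Fin n) ℂ)) ≤ W) →
    ∃ W' : Submodule ℂ (Fin n → ℂ),
      (∀ γ : SurfaceGamma g, W'.map (Matrix.mulVecLin (ρ γ : Matrix (Fin n) (Fin n) ℂ)) ≤ W') ∧
      IsCompl W W'

/-- The space of all semisimple homomorphisms `Γ → GL(n, ℂ)`. -/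
def SemisimpleHomSpace (g n : ℕ) : Type :=
  {ρ : SurfaceGamma g →* GL (Fin n) ℂ // IsSemisimpleRep ρ}

/-- The topology on the space of homomorphisms, induced by the inclusion into
`GL(n,ℂ)^{2g+1}` given by the images of the generators. -/
noncomputable instance (g n : ℕ) : TopologicalSpace (SemisimpleHomSpace g n) :=
  TopologicalSpace.induced
    (fun ρ : SemisimpleHomSpace g n => fun s : SurfaceGen g => ρ.1 (PresentedGroup.of s))
    inferInstance

/-- Two homomorphisms are related iff they are conjugate by an element of `GL(n, ℂ)`. -/
def semisimpleConjRel (g n : ℕ) :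
    SemisimpleHomSpace g n → SemisimpleHomSpace g n → Prop :=
  fun ρ σ => ∃ T : GL (Fin n) ℂ, ∀ γ : SurfaceGamma g, σ.1 γ = T * ρ.1 γ * T⁻¹

/-- The moduli space `𝓡(Γ, GL(n,ℂ))`: the quotient of the space of all semisimple
homomorphisms `Γ → GL(n,ℂ)` by the conjugation action of `GL(n,ℂ)`, with the
quotient topology. -/
abbrev RModuliAll (g n : ℕ) : Type := Quot (semisimpleConjRel g n)

open Module LinearMap

noncomputable section Theory

variable {A : Type} [Ring A] [Algebra ℂ A]

/-- A bundled finite-dimensional complex module with a compatible `A`-action. -/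
structure ModC (A : Type) [Ring A] [Algebra ℂ A] : Type 1 where
  M : Type
  [acg : AddCommGroup M]
  [mc : Module ℂ M]
  [ma : Module A M]
  [tow : IsScalarTower ℂ A M]
  [fd : FiniteDimensional ℂ M]

attribute [instance] ModC.acg ModC.mc ModC.ma ModC.tow ModC.fd

namespace ModC

/-- The action of `a : A` as a `ℂ`-linear endomorphism. -/
def act (V : ModC A) (a : A) : V.M →ₗ[ℂ] V.M where
  toFun x := a • x
  map_add' := smul_add a
  map_smul' c x := by
    haveI := IsScalarTower.to_smulCommClass (R := ℂ) (A := A) (M := V.M)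
    exact (smul_comm c a x).symm

@[simp] lemma act_apply (V : ModC A) (a : A) (x : V.M) : V.act a x = a • x := rfl

/-- The character of a `ModC`. -/
def chr (V : ModC A) (a : A) : ℂ := LinearMap.trace ℂ V.M (V.act a)

/-- Transfer an `A`-linear equiv to a `ℂ`-linear equiv. -/
def toCEquiv {V W : ModC A} (e : V.M ≃ₗ[A] W.M) : V.M ≃ₗ[ℂ] W.M where
  toFun := e
  invFun := e.symm
  left_inv := e.left_inv
  right_inv := e.right_inv
  map_add' := map_add e
  map_smul' c x := by
    simp only [RingHom.id_apply]
    rw [← algebraMap_smul A c x, _root_.map_smul, algebraMap_smul]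

lemma map_csmul {V W : ModC A} (g : V.M →ₗ[A] W.M) (c : ℂ) (y : V.M) :
    g (c • y) = c • g y := by
  rw [← algebraMap_smul A c y, _root_.map_smul, algebraMap_smul]

lemma chr_congr {V W : ModC A} (e : V.M ≃ₗ[A] W.M) (a : A) : V.chr a = W.chr a := by
  have h : W.act a = (toCEquiv e).conj (V.act a) := by
    ext x
    simp [LinearEquiv.conj_apply, toCEquiv, _root_.map_smul]
  rw [chr, chr, h, LinearMap.trace_conj']

/-- Product of two `ModC`s. -/
def prod (V W : ModC A) : ModC A := ⟨V.M × W.M⟩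

lemma chr_prod (V W : ModC A) (a : A) : (V.prod W).chr a = V.chr a + W.chr a := by
  have h : (V.prod W).act a = (V.act a).prodMap (W.act a) := by ext x <;> rfl
  rw [chr, h]
  exact LinearMap.trace_prodMap' (V.act a) (W.act a)

/-- The trivial `ModC`. -/
def punit : ModC A := ⟨PUnit⟩

lemma chr_punit (a : A) : (punit (A := A)).chr a = 0 := by
  haveI : Subsingleton (punit (A := A)).M := inferInstanceAs (Subsingleton PUnit)
  have : (punit (A := A)).act a = 0 := by
    ext x
    exact Subsingleton.elim _ _
  rw [chr, this, map_zero]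

/-- A submodule as a `ModC`. -/
def sub (V : ModC A) (p : Submodule A V.M) : ModC A :=
  { M := ↥p
    mc := inferInstanceAs (Module ℂ ↥(p.restrictScalars ℂ))
    tow := ⟨fun c a x => Subtype.ext (smul_assoc c a x.val)⟩
    fd := inferInstanceAs (FiniteDimensional ℂ ↥(p.restrictScalars ℂ)) }

lemma chr_of_smul_eq (V : ModC A) {a : A} {c : ℂ} (h : ∀ x : V.M, a • x = c • x) :
    V.chr a = c * (finrank ℂ V.M : ℂ) := by
  have : V.act a = c • LinearMap.id := by ext x; simpa using h x
  rw [chr, this, _root_.map_smul, LinearMap.trace_id, smul_eq_mul]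

lemma chr_one (V : ModC A) : V.chr 1 = (finrank ℂ V.M : ℂ) := by
  have := V.chr_of_smul_eq (a := 1) (c := 1) (fun x => by simp)
  simpa using this

/-- Product of a list of `ModC`s. -/
def piL : List (ModC A) → ModC A
  | [] => punit
  | X :: L => X.prod (piL L)

lemma chr_piL (L : List (ModC A)) (a : A) :
    (piL L).chr a = ∑ i : Fin L.length, (L.get i).chr a := by
  induction L with
  | nil => simpa [piL] using chr_punit a
  | cons X L ih =>
      show (X.prod (piL L)).chr a = ∑ i : Fin (L.length + 1), ((X :: L).get i).chr a
      rw [Fin.sum_univ_succ, chr_prod, ih]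
      exact congrArg₂ (· + ·) rfl (Finset.sum_congr rfl fun i _ => rfl)

/-- Inclusion of the `i`-th factor into the list product. -/
def inclL : (L : List (ModC A)) → (i : Fin L.length) → (L.get i).M →ₗ[A] (piL L).M
  | X :: L, ⟨0, _⟩ => LinearMap.inl A X.M (piL L).M
  | X :: L, ⟨i + 1, h⟩ =>
      (LinearMap.inr A X.M (piL L).M) ∘ₗ inclL L ⟨i, by simpa using h⟩

lemma inclL_injective : ∀ (L : List (ModC A)) (i : Fin L.length),
    Function.Injective (inclL L i)
  | X :: L, ⟨0, _⟩ => LinearMap.inl_injective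
  | X :: L, ⟨i + 1, h⟩ => by
      simp only [inclL, LinearMap.coe_comp]
      exact fun a b hab => inclL_injective L ⟨i, by simpa using h⟩
        (LinearMap.inr_injective (show LinearMap.inr A X.M (piL L).M (inclL L ⟨i, by simpa using h⟩ a) =
          LinearMap.inr A X.M (piL L).M (inclL L ⟨i, by simpa using h⟩ b) from hab))

/-- Product over a finite index of `ModC`s. -/
def pi {ι : Type} [Fintype ι] (X : ι → ModC A) : ModC A := ⟨∀ i, (X i).M⟩

lemma pi_semisimple {ι : Type} [Fintype ι] (X : ι → ModC A)
    (hss : ∀ i, IsSemisimpleModule A (X i).M) :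
    IsSemisimpleModule A (∀ i, (X i).M) := by
  classical
  apply isSemisimpleModule_of_isSemisimpleModule_submodule'
    (p := fun i => LinearMap.range (LinearMap.single A (fun i => (X i).M) i))
  · intro i
    haveI := hss i
    exact IsSemisimpleModule.congr
      (LinearEquiv.ofInjective _ (fun a b hab => by simpa using congrFun hab i)).symm
  · rw [eq_top_iff]
    intro x _
    rw [← Finset.univ_sum_single x]
    exact Submodule.sum_mem _ fun j _ => Submodule.mem_iSup_of_mem j ⟨x j, rfl⟩

lemma key_invariant (V : ModC A) (hss : IsSemisimpleModule A V.M) (f : V.M →ₗ[ℂ] V.M)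
    (hf : ∀ (c : V.M →ₗ[A] V.M) (x : V.M), f (c x) = c (f x))
    {m : ℕ} (p : Submodule A (Fin m → V.M)) {x : Fin m → V.M} (hx : x ∈ p) :
    (fun i => f (x i)) ∈ p := by
  haveI : IsSemisimpleModule A (Fin m → V.M) :=
    pi_semisimple (fun _ : Fin m => V) (fun _ => hss)
  obtain ⟨q, hq⟩ := exists_isCompl p
  set π : (Fin m → V.M) →ₗ[A] (Fin m → V.M) :=
    p.subtype ∘ₗ p.projectionOnto q hq with hπ
  have hrange : ∀ y, π y ∈ p := fun y => (p.projectionOnto q hq y).2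
  have hfix : π x = x := by
    have := congrArg (p.subtype) (Submodule.projectionOnto_apply_left hq ⟨x, hx⟩)
    simpa [hπ] using this
  have hcomm : ∀ y, (fun i => f ((π y) i)) = π (fun i => f (y i)) := by
    intro y
    funext i
    have expand : ∀ z : Fin m → V.M, (π z) i = ∑ j, (π (Pi.single j (z j))) i := by
      intro z
      conv_lhs => rw [← Finset.univ_sum_single z]
      rw [map_sum]
      exact Finset.sum_apply i _ _
    have hms := map_sum f (fun j => π (Pi.single j (y j)) i) Finset.univ
    rw [expand y, hms, expand (fun i => f (y i))]
    refine Finset.sum_congr rfl fun j _ => ?_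
    exact hf ((LinearMap.proj i) ∘ₗ π ∘ₗ (LinearMap.single A (fun _ => V.M) j)) (y j)
  have hxx : (fun i => f (x i)) = π (fun i => f (x i)) := by
    conv_lhs => rw [show x = π x from hfix.symm]
    exact hcomm x
  rw [hxx]
  exact hrange _

lemma exists_smul_eq_of_commutes (V : ModC A) (hss : IsSemisimpleModule A V.M)
    (f : V.M →ₗ[ℂ] V.M)
    (hf : ∀ (c : V.M →ₗ[A] V.M) (x : V.M), f (c x) = c (f x)) :
    ∃ a : A, ∀ x, a • x = f x := by
  set b := Module.finBasis ℂ V.M with hb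
  set v : Fin (finrank ℂ V.M) → V.M := ⇑b with hv
  have hmem : (fun i => f (v i)) ∈ Submodule.span A {v} :=
    key_invariant V hss f hf _ (Submodule.mem_span_singleton_self v)
  rw [Submodule.mem_span_singleton] at hmem
  obtain ⟨a, ha⟩ := hmem
  have hact : V.act a = f := by
    apply b.ext
    intro i
    have := congrFun ha i
    simpa using this
  exact ⟨a, fun x => by rw [← hact]; rfl⟩

lemma exists_separating {ι : Type} [Fintype ι] (X : ι → ModC A)
    (hX : ∀ i, IsSimpleModule A (X i).M)
    (e : ι → ℂ) (he : ∀ i j, Nonempty ((X i).M ≃ₗ[A] (X j).M) → e i = e j) :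
    ∃ a : A, ∀ (i : ι) (x : (X i).M), a • x = e i • x := by
  classical
  set V : ModC A := pi X with hV
  have hss : IsSemisimpleModule A V.M := by
    apply pi_semisimple
    intro i
    haveI := hX i
    infer_instance
  set F : V.M →ₗ[ℂ] V.M :=
    LinearMap.pi (fun i => e i • LinearMap.proj (R := ℂ) (φ := fun i => (X i).M) i) with hF
  have hFapp : ∀ (x : V.M) (i : ι), F x i = e i • x i := fun x i => rfl
  have hf : ∀ (c : V.M →ₗ[A] V.M) (x : V.M), F (c x) = c (F x) := by
    intro c x
    funext i
    have expand : ∀ z : V.M, (c z) i = ∑ j,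
        ((LinearMap.proj i) ∘ₗ c ∘ₗ (LinearMap.single A (fun j => (X j).M) j)) (z j) := by
      intro z
      conv_lhs => rw [← Finset.univ_sum_single z]
      exact (congrArg (fun w : (∀ j, (X j).M) => w i) (map_sum c
        (fun j => (Pi.single j (z j) : ∀ j, (X j).M)) Finset.univ)).trans (Finset.sum_apply i _ _)
    rw [hFapp, expand x, expand (F x), Finset.smul_sum]
    refine Finset.sum_congr rfl fun j _ => ?_
    set cij : (X j).M →ₗ[A] (X i).M :=
      (LinearMap.proj i) ∘ₗ c ∘ₗ (LinearMap.single A (fun j => (X j).M) j) with hcij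
    haveI := hX i; haveI := hX j
    rcases LinearMap.bijective_or_eq_zero cij with hbij | hzero
    · have hiso : e j = e i := he j i ⟨LinearEquiv.ofBijective cij hbij⟩
      rw [hFapp, map_csmul, hiso]
    · rw [hFapp, map_csmul]
      have h0 : cij (x j) = 0 := by simp [hzero]
      exact (congrArg (e i • ·) h0).trans
        ((smul_zero _).trans ((congrArg (e j • ·) h0).trans (smul_zero _)).symm)
  obtain ⟨a, ha⟩ := exists_smul_eq_of_commutes V hss F hf
  refine ⟨a, fun i x => ?_⟩
  set s : V.M := (Pi.single i x : ∀ j, (X j).M) with hs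
  have h1 := congrFun (ha s) i
  have h2 : (a • s) i = a • x := by
    exact congrArg (fun y => a • y) (Pi.single_eq_same (M := fun j => (X j).M) i x)
  have h3 : F s i = e i • x := by
    rw [hFapp, hs, Pi.single_eq_same]
  rw [h2, h3] at h1
  exact h1

lemma exists_simple_submodule (V : ModC A) (hnt : Nontrivial V.M) :
    ∃ p : Submodule A V.M, IsSimpleModule A ↥p := by
  classical
  set P : ℕ → Prop := fun k => ∃ p : Submodule A V.M, p ≠ ⊥ ∧
    finrank ℂ ↥(p.restrictScalars ℂ) = k with hP
  have hex : ∃ k, P k := ⟨_, ⊤, by simp, rfl⟩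
  obtain ⟨p, hp0, hpk⟩ := Nat.find_spec hex
  refine ⟨p, ?_⟩
  haveI hnt' : Nontrivial ↥p := Submodule.nontrivial_iff_ne_bot.mpr hp0
  rw [isSimpleModule_iff]
  constructor
  intro q
  by_cases hq : q.map p.subtype = ⊥
  · left
    apply Submodule.map_injective_of_injective p.injective_subtype
    rw [hq, Submodule.map_bot]
  · right
    have hle : q.map p.subtype ≤ p := Submodule.map_subtype_le p q
    have hfind : Nat.find hex ≤ finrank ℂ ↥((q.map p.subtype).restrictScalars ℂ) :=
      Nat.find_min' hex ⟨q.map p.subtype, hq, rfl⟩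
    have heq : (q.map p.subtype).restrictScalars ℂ = p.restrictScalars ℂ := by
      apply Submodule.eq_of_le_of_finrank_le
      · exact fun x hx => hle hx
      · omega
    have hmap : q.map p.subtype = p := Submodule.restrictScalars_injective ℂ _ _ heq
    apply Submodule.map_injective_of_injective p.injective_subtype
    rw [hmap, Submodule.map_top, Submodule.range_subtype]

/-- Decomposition of a f.d. semisimple module into a list of simple ones. -/
lemma exists_decomp : ∀ (d : ℕ) (V : ModC A), IsSemisimpleModule A V.M →
    finrank ℂ V.M ≤ d →
    ∃ L : List (ModC A), (∀ X ∈ L, IsSimpleModule A X.M) ∧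
      Nonempty ((piL L).M ≃ₗ[A] V.M) := by
  intro d
  induction d with
  | zero =>
      intro V hss hle
      haveI : Subsingleton V.M := by
        rw [← finrank_zero_iff (R := ℂ)]
        omega
      haveI : Subsingleton (piL ([] : List (ModC A))).M :=
        inferInstanceAs (Subsingleton PUnit)
      refine ⟨[], by simp, ⟨LinearEquiv.ofLinear 0 0 ?_ ?_⟩⟩ <;>
        · ext x; exact Subsingleton.elim _ _
  | succ d ih =>
      intro V hss hle
      rcases subsingleton_or_nontrivial V.M with hsub | hnt
      · haveI : Subsingleton (piL ([] : List (ModC A))).M :=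
          inferInstanceAs (Subsingleton PUnit)
        refine ⟨[], by simp, ⟨LinearEquiv.ofLinear 0 0 ?_ ?_⟩⟩ <;>
          · ext x; exact Subsingleton.elim _ _
      · obtain ⟨p, hp⟩ := exists_simple_submodule V hnt
        haveI := hss
        obtain ⟨q, hq⟩ := exists_isCompl p
        let epq : (↥p × ↥q) ≃ₗ[A] V.M := Submodule.prodEquivOfIsCompl p q hq
        haveI : IsSemisimpleModule A ↥q := inferInstance
        -- finrank bound for q
        have hsum : finrank ℂ (V.sub p).M + finrank ℂ (V.sub q).M = finrank ℂ V.M := by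
          rw [← Module.finrank_prod (R := ℂ) (M := (V.sub p).M) (M' := (V.sub q).M)]
          exact LinearEquiv.finrank_eq
            (toCEquiv (V := (V.sub p).prod (V.sub q)) (W := V) epq)
        have hppos : 0 < finrank ℂ (V.sub p).M := by
          haveI : Nontrivial (V.sub p).M := by
            haveI := hp
            exact IsSimpleModule.nontrivial A ↥p
          exact Module.finrank_pos
        obtain ⟨L, hL, ⟨eL⟩⟩ := ih (V.sub q)
          (inferInstanceAs (IsSemisimpleModule A ↥q)) (by omega)
        refine ⟨V.sub p :: L, ?_, ?_⟩
        · intro X hX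
          rcases List.mem_cons.mp hX with h | h
          · subst h; exact hp
          · exact hL X h
        · exact ⟨((LinearEquiv.refl A (V.sub p).M).prodCongr eL).trans epq⟩

lemma exists_common_simple (M N : ModC A) (hssM : IsSemisimpleModule A M.M)
    (hssN : IsSemisimpleModule A N.M) (hnt : Nontrivial M.M)
    (h : ∀ a : A, M.chr a = N.chr a) :
    ∃ (S : Submodule A M.M) (T : Submodule A N.M),
      IsSimpleModule A ↥S ∧ IsSimpleModule A ↥T ∧ Nonempty (↥S ≃ₗ[A] ↥T) := by
  classical
  obtain ⟨L, hL, ⟨eL⟩⟩ := exists_decomp (finrank ℂ M.M) M hssM le_rfl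
  obtain ⟨K, hK, ⟨eK⟩⟩ := exists_decomp (finrank ℂ N.M) N hssN le_rfl
  have hLne : L ≠ [] := by
    rintro rfl
    haveI : Subsingleton (piL ([] : List (ModC A))).M :=
      inferInstanceAs (Subsingleton PUnit)
    haveI : Subsingleton M.M := (eL.toEquiv.symm).subsingleton
    obtain ⟨x, y, hxy⟩ := hnt
    exact hxy (Subsingleton.elim x y)
  have hlen : 0 < L.length := List.length_pos_iff.mpr hLne
  set i₀ : Fin L.length := ⟨0, hlen⟩ with hi₀
  by_contra hcon
  have key : ∀ (i : Fin L.length) (j : Fin K.length),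
      ¬ Nonempty ((L.get i).M ≃ₗ[A] (K.get j).M) := by
    rintro i j ⟨φ⟩
    apply hcon
    have hSi : Function.Injective ⇑(eL.toLinearMap ∘ₗ inclL L i) := by
      rw [LinearMap.coe_comp]
      exact eL.injective.comp (inclL_injective L i)
    have hTj : Function.Injective ⇑(eK.toLinearMap ∘ₗ inclL K j) := by
      rw [LinearMap.coe_comp]
      exact eK.injective.comp (inclL_injective K j)
    set S : Submodule A M.M := LinearMap.range (eL.toLinearMap ∘ₗ inclL L i) with hS
    set T : Submodule A N.M := LinearMap.range (eK.toLinearMap ∘ₗ inclL K j) with hT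
    let eS : (L.get i).M ≃ₗ[A] ↥S := LinearEquiv.ofInjective _ hSi
    let eT : (K.get j).M ≃ₗ[A] ↥T := LinearEquiv.ofInjective _ hTj
    haveI hsi : IsSimpleModule A (L.get i).M := hL _ (List.get_mem L i)
    haveI hsj : IsSimpleModule A (K.get j).M := hK _ (List.get_mem K j)
    refine ⟨S, T, IsSimpleModule.congr eS.symm, IsSimpleModule.congr eT.symm,
      ⟨eS.symm.trans (φ.trans eT)⟩⟩
  set Z : Fin L.length ⊕ Fin K.length → ModC A :=
    Sum.elim (fun i => L.get i) (fun j => K.get j) with hZ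
  have hZs : ∀ k, IsSimpleModule A (Z k).M := by
    rintro (i | j)
    · exact hL _ (List.get_mem L i)
    · exact hK _ (List.get_mem K j)
  set ee : Fin L.length ⊕ Fin K.length → ℂ :=
    fun k => if Nonempty ((Z k).M ≃ₗ[A] (L.get i₀).M) then 1 else 0 with hee
  have he : ∀ k l, Nonempty ((Z k).M ≃ₗ[A] (Z l).M) → ee k = ee l := by
    rintro k l ⟨ψ⟩
    have hiff : Nonempty ((Z k).M ≃ₗ[A] (L.get i₀).M) ↔
        Nonempty ((Z l).M ≃ₗ[A] (L.get i₀).M) :=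
      ⟨fun ⟨χ⟩ => ⟨ψ.symm.trans χ⟩, fun ⟨χ⟩ => ⟨ψ.trans χ⟩⟩
    simp only [hee, hiff]
  obtain ⟨a, ha⟩ := exists_separating Z hZs ee he
  have hchrL : M.chr a =
      ∑ i : Fin L.length, ee (Sum.inl i) * (finrank ℂ (L.get i).M : ℂ) := by
    rw [← chr_congr eL a, chr_piL]
    exact Finset.sum_congr rfl fun i _ => chr_of_smul_eq _ (ha (Sum.inl i))
  have hchrK : N.chr a = 0 := by
    rw [← chr_congr eK a, chr_piL]
    refine Finset.sum_eq_zero fun j _ => ?_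
    have hne : ¬ Nonempty ((Z (Sum.inr j)).M ≃ₗ[A] (L.get i₀).M) := by
      rintro ⟨χ⟩
      exact key i₀ j ⟨χ.symm⟩
    have h0 : ee (Sum.inr j) = 0 := if_neg hne
    have hz := chr_of_smul_eq (Z (Sum.inr j)) (ha (Sum.inr j))
    rw [h0, zero_mul] at hz
    exact hz
  have hcast : M.chr a = ((∑ i : Fin L.length,
      if Nonempty ((L.get i).M ≃ₗ[A] (L.get i₀).M) then finrank ℂ (L.get i).M else 0 : ℕ) : ℂ) := by
    rw [hchrL, Nat.cast_sum]
    refine Finset.sum_congr rfl fun i _ => ?_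
    rw [apply_ite (Nat.cast : ℕ → ℂ), Nat.cast_zero]
    show (if Nonempty ((Z (Sum.inl i)).M ≃ₗ[A] (L.get i₀).M) then (1:ℂ) else 0) * _ = _
    by_cases hc : Nonempty ((Z (Sum.inl i)).M ≃ₗ[A] (L.get i₀).M)
    · have hc' : Nonempty ((L.get i).M ≃ₗ[A] (L.get i₀).M) := hc
      rw [if_pos hc, if_pos hc', one_mul]
    · have hc' : ¬ Nonempty ((L.get i).M ≃ₗ[A] (L.get i₀).M) := hc
      rw [if_neg hc, if_neg hc', zero_mul]
  have hterm : 0 < ∑ i : Fin L.length,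
      if Nonempty ((L.get i).M ≃ₗ[A] (L.get i₀).M) then finrank ℂ (L.get i).M else 0 := by
    refine Finset.sum_pos' (fun i _ => Nat.zero_le _) ⟨i₀, Finset.mem_univ _, ?_⟩
    rw [if_pos ⟨LinearEquiv.refl A _⟩]
    haveI : IsSimpleModule A (L.get i₀).M := hL _ (List.get_mem L i₀)
    haveI : Nontrivial (L.get i₀).M := IsSimpleModule.nontrivial A _
    exact Module.finrank_pos
  have : M.chr a ≠ 0 := by
    rw [hcast]
    exact_mod_cast hterm.ne'
  exact this (by rw [h a, hchrK])

lemma iso_of_subsingleton (M N : ModC A) (hsub : Subsingleton M.M)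
    (h : ∀ a : A, M.chr a = N.chr a) : Nonempty (M.M ≃ₗ[A] N.M) := by
  haveI := hsub
  have h1 := h 1
  rw [chr_one, chr_one, (finrank_zero_iff (R := ℂ)).mpr hsub] at h1
  have h2 : finrank ℂ N.M = 0 := by exact_mod_cast h1.symm
  haveI : Subsingleton N.M := (finrank_zero_iff (R := ℂ)).mp h2
  exact ⟨LinearEquiv.ofLinear 0 0 (by ext x; exact Subsingleton.elim _ _)
    (by ext x; exact Subsingleton.elim _ _)⟩

theorem iso_of_chr_eq_aux : ∀ (d : ℕ) (M N : ModC A), IsSemisimpleModule A M.M →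
    IsSemisimpleModule A N.M → finrank ℂ M.M ≤ d →
    (∀ a : A, M.chr a = N.chr a) → Nonempty (M.M ≃ₗ[A] N.M) := by
  intro d
  induction d with
  | zero =>
      intro M N _ _ hle h
      haveI : Subsingleton M.M := by
        rw [← finrank_zero_iff (R := ℂ)]
        omega
      exact iso_of_subsingleton M N this h
  | succ d ih =>
      intro M N hssM hssN hle h
      rcases subsingleton_or_nontrivial M.M with hsub | hnt
      · exact iso_of_subsingleton M N hsub h
      · obtain ⟨S, T, hS, hT, ⟨φ⟩⟩ := exists_common_simple M N hssM hssN hnt h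
        haveI := hssM; haveI := hssN
        obtain ⟨S', hS'⟩ := exists_isCompl S
        obtain ⟨T', hT'⟩ := exists_isCompl T
        let eM : (↥S × ↥S') ≃ₗ[A] M.M := Submodule.prodEquivOfIsCompl S S' hS'
        let eN : (↥T × ↥T') ≃ₗ[A] N.M := Submodule.prodEquivOfIsCompl T T' hT'
        have hchr' : ∀ a : A, (M.sub S').chr a = (N.sub T').chr a := by
          intro a
          have h1 : (M.sub S).chr a + (M.sub S').chr a = M.chr a := by
            rw [← chr_prod]
            exact chr_congr (V := (M.sub S).prod (M.sub S')) (W := M) eM a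
          have h2 : (N.sub T).chr a + (N.sub T').chr a = N.chr a := by
            rw [← chr_prod]
            exact chr_congr (V := (N.sub T).prod (N.sub T')) (W := N) eN a
          have h3 : (M.sub S).chr a = (N.sub T).chr a :=
            chr_congr (V := M.sub S) (W := N.sub T) φ a
          linear_combination h a + h1 - h2 - h3
        have hsum : finrank ℂ (M.sub S).M + finrank ℂ (M.sub S').M = finrank ℂ M.M := by
          rw [← Module.finrank_prod (R := ℂ) (M := (M.sub S).M) (M' := (M.sub S').M)]
          exact LinearEquiv.finrank_eq
            (toCEquiv (V := (M.sub S).prod (M.sub S')) (W := M) eM)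
        have hSpos : 0 < finrank ℂ (M.sub S).M := by
          haveI := hS
          haveI : Nontrivial (M.sub S).M := IsSimpleModule.nontrivial A ↥S
          exact Module.finrank_pos
        obtain ⟨ψ⟩ := ih (M.sub S') (N.sub T')
          (inferInstanceAs (IsSemisimpleModule A ↥S'))
          (inferInstanceAs (IsSemisimpleModule A ↥T')) (by omega) hchr'
        exact ⟨eM.symm.trans ((φ.prodCongr ψ).trans eN)⟩

/-- Main abstract theorem: two finite-dimensional semisimple modules over a
complex algebra with the same character are isomorphic. -/
theorem iso_of_chr_eq (M N : ModC A) (hssM : IsSemisimpleModule A M.M)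
    (hssN : IsSemisimpleModule A N.M) (h : ∀ a : A, M.chr a = N.chr a) :
    Nonempty (M.M ≃ₗ[A] N.M) :=
  iso_of_chr_eq_aux (finrank ℂ M.M) M N hssM hssN le_rfl h

end ModC

end Theory


/-! ### Application: representations of a group into `GL(n, ℂ)` -/

noncomputable section Application

set_option synthInstance.maxHeartbeats 400000
set_option maxHeartbeats 1000000

open Matrix

variable {n : ℕ} {G : Type} [Group G]

/-- The pair of matrix images of a group element. -/
def pairMap (ρ σ : G →* GL (Fin n) ℂ) :
    G →* (Matrix (Fin n) (Fin n) ℂ × Matrix (Fin n) (Fin n) ℂ) where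
  toFun g := ((ρ g : Matrix (Fin n) (Fin n) ℂ), (σ g : Matrix (Fin n) (Fin n) ℂ))
  map_one' := by simp
  map_mul' x y := by simp [Prod.ext_iff]

/-- The subalgebra of `Mₙ(ℂ) × Mₙ(ℂ)` spanned by the images of the group. -/
def pairAlg (ρ σ : G →* GL (Fin n) ℂ) :
    Subalgebra ℂ (Matrix (Fin n) (Fin n) ℂ × Matrix (Fin n) (Fin n) ℂ) where
  carrier := (Submodule.span ℂ (Set.range (pairMap ρ σ)) :
    Submodule ℂ (Matrix (Fin n) (Fin n) ℂ × Matrix (Fin n) (Fin n) ℂ))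
  add_mem' ha hb := add_mem ha hb
  zero_mem' := zero_mem _
  one_mem' := Submodule.subset_span ⟨1, map_one _⟩
  algebraMap_mem' c := by
    rw [Algebra.algebraMap_eq_smul_one]
    exact Submodule.smul_mem _ c (Submodule.subset_span ⟨1, map_one _⟩)
  mul_mem' {x y} hx hy := by
    induction hx using Submodule.span_induction with
    | mem x hxg =>
        induction hy using Submodule.span_induction with
        | mem y hyg =>
            obtain ⟨gx, rfl⟩ := hxg
            obtain ⟨gy, rfl⟩ := hyg
            exact Submodule.subset_span ⟨gx * gy, (map_mul (pairMap ρ σ) gx gy).symm ▸ rfl⟩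
        | zero => rw [mul_zero]; exact zero_mem _
        | add y z _ _ hy hz => rw [mul_add]; exact add_mem hy hz
        | smul c y _ hy => rw [mul_smul_comm]; exact Submodule.smul_mem _ c hy
    | zero => rw [zero_mul]; exact zero_mem _
    | add x z _ _ hx' hz' => rw [add_mul]; exact add_mem hx' hz'
    | smul c x _ hx' => rw [smul_mul_assoc]; exact Submodule.smul_mem _ c hx'

lemma pairMap_mem (ρ σ : G →* GL (Fin n) ℂ) (g : G) : pairMap ρ σ g ∈ pairAlg ρ σ :=
  Submodule.subset_span ⟨g, rfl⟩

lemma pairAlg_induction (ρ σ : G →* GL (Fin n) ℂ)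
    {p : Matrix (Fin n) (Fin n) ℂ × Matrix (Fin n) (Fin n) ℂ → Prop}
    (mem : ∀ g : G, p (pairMap ρ σ g)) (zero : p 0)
    (add : ∀ x y, p x → p y → p (x + y))
    (smul : ∀ (c : ℂ) x, p x → p (c • x))
    {x} (hx : x ∈ pairAlg ρ σ) : p x := by
  have hx' : x ∈ Submodule.span ℂ (Set.range (pairMap ρ σ)) := hx
  clear hx
  induction hx' using Submodule.span_induction with
  | mem x hxg =>
      obtain ⟨g, rfl⟩ := hxg
      exact mem g
  | zero => exact zero
  | add x y _ _ hx hy => exact add x y hx hy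
  | smul c x _ hx => exact smul c x hx

/-- The `ℂ`-algebra morphism acting on `Fin n → ℂ` through the first component. -/
def actFst (ρ σ : G →* GL (Fin n) ℂ) :
    pairAlg ρ σ →ₐ[ℂ] Module.End ℂ (Fin n → ℂ) :=
  (Matrix.toLinAlgEquiv' :
      Matrix (Fin n) (Fin n) ℂ ≃ₐ[ℂ] Module.End ℂ (Fin n → ℂ)).toAlgHom.comp
    ((AlgHom.fst ℂ _ _).comp (pairAlg ρ σ).val)

/-- The `ℂ`-algebra morphism acting on `Fin n → ℂ` through the second component. -/
def actSnd (ρ σ : G →* GL (Fin n) ℂ) :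
    pairAlg ρ σ →ₐ[ℂ] Module.End ℂ (Fin n → ℂ) :=
  (Matrix.toLinAlgEquiv' :
      Matrix (Fin n) (Fin n) ℂ ≃ₐ[ℂ] Module.End ℂ (Fin n → ℂ)).toAlgHom.comp
    ((AlgHom.snd ℂ _ _).comp (pairAlg ρ σ).val)

/-- The module structure on `ℂⁿ` over `pairAlg ρ σ` from an action morphism. -/
def actModule (ρ σ : G →* GL (Fin n) ℂ)
    (φ : pairAlg ρ σ →ₐ[ℂ] Module.End ℂ (Fin n → ℂ)) :
    Module (pairAlg ρ σ) (Fin n → ℂ) :=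
  Module.compHom (Fin n → ℂ) φ.toRingHom

def actModC (ρ σ : G →* GL (Fin n) ℂ)
    (φ : pairAlg ρ σ →ₐ[ℂ] Module.End ℂ (Fin n → ℂ)) : ModC (pairAlg ρ σ) :=
  letI m : Module (pairAlg ρ σ) (Fin n → ℂ) := actModule ρ σ φ
  { M := Fin n → ℂ
    ma := m
    tow := ⟨fun c a x => by
      show φ (c • a) x = c • (φ a x)
      rw [_root_.map_smul]
      rfl⟩ }

lemma actModC_smul (ρ σ : G →* GL (Fin n) ℂ)
    (φ : pairAlg ρ σ →ₐ[ℂ] Module.End ℂ (Fin n → ℂ)) (a : pairAlg ρ σ)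
    (x : (actModC ρ σ φ).M) : a • x = φ a x := rfl

end Application


noncomputable section Application2

set_option synthInstance.maxHeartbeats 400000
set_option maxHeartbeats 1000000

open Matrix Module

variable {n : ℕ} {G : Type} [Group G]

lemma toMatrix'_mulVecLin (M : Matrix (Fin n) (Fin n) ℂ) :
    LinearMap.toMatrix' (Matrix.mulVecLin M) = M := by
  have h : Matrix.mulVecLin M = Matrix.toLin' M := by
    ext x
    simp [Matrix.mulVecLin_apply, Matrix.toLin'_apply]
  rw [h, LinearMap.toMatrix'_toLin']

lemma actFst_smul (ρ σ : G →* GL (Fin n) ℂ) (a : pairAlg ρ σ)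
    (x : (actModC ρ σ (actFst ρ σ)).M) :
    a • x = Matrix.mulVecLin a.val.1 x := by
  show (actFst ρ σ a) x = Matrix.mulVecLin a.val.1 x
  simp only [actFst, AlgHom.coe_comp, Function.comp_apply, AlgEquiv.toAlgHom_eq_coe,
    AlgEquiv.coe_algHom, Matrix.toLinAlgEquiv'_apply, Matrix.mulVecLin_apply]
  rfl

lemma actSnd_smul (ρ σ : G →* GL (Fin n) ℂ) (a : pairAlg ρ σ)
    (x : (actModC ρ σ (actSnd ρ σ)).M) :
    a • x = Matrix.mulVecLin a.val.2 x := by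
  show (actSnd ρ σ a) x = Matrix.mulVecLin a.val.2 x
  simp only [actSnd, AlgHom.coe_comp, Function.comp_apply, AlgEquiv.toAlgHom_eq_coe,
    AlgEquiv.coe_algHom, Matrix.toLinAlgEquiv'_apply, Matrix.mulVecLin_apply]
  rfl

/-- Semisimplicity in the invariant-subspace sense transfers to the module over `pairAlg`. -/
lemma semisimple_actModC (ρ σ τ : G →* GL (Fin n) ℂ)
    (φ : pairAlg ρ σ →ₐ[ℂ] Module.End ℂ (Fin n → ℂ))
    (pr : (Matrix (Fin n) (Fin n) ℂ × Matrix (Fin n) (Fin n) ℂ) →ₗ[ℂ]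
      Matrix (Fin n) (Fin n) ℂ)
    (hsmul : ∀ (a : pairAlg ρ σ) (x : (actModC ρ σ φ).M),
      a • x = Matrix.mulVecLin (pr a.val) x)
    (hpr : ∀ g : G, pr (pairMap ρ σ g) = (τ g : Matrix (Fin n) (Fin n) ℂ))
    (hτ : ∀ W : Submodule ℂ (Fin n → ℂ),
      (∀ γ : G, W.map (Matrix.mulVecLin ((τ γ : Matrix (Fin n) (Fin n) ℂ))) ≤ W) →
      ∃ W' : Submodule ℂ (Fin n → ℂ),
        (∀ γ : G, W'.map (Matrix.mulVecLin ((τ γ : Matrix (Fin n) (Fin n) ℂ))) ≤ W') ∧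
        IsCompl W W') :
    IsSemisimpleModule (pairAlg ρ σ) (actModC ρ σ φ).M := by
  rw [isSemisimpleModule_iff]
  constructor
  intro p
  let W : Submodule ℂ (Fin n → ℂ) := p.restrictScalars ℂ
  have hWinv : ∀ γ : G, W.map (Matrix.mulVecLin ((τ γ : Matrix (Fin n) (Fin n) ℂ))) ≤ W := by
    rintro γ x ⟨y, hy, rfl⟩
    have hmem := p.smul_mem (⟨pairMap ρ σ γ, pairMap_mem ρ σ γ⟩ : pairAlg ρ σ) hy
    have h1 := hsmul (⟨pairMap ρ σ γ, pairMap_mem ρ σ γ⟩ : pairAlg ρ σ) y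
    rw [h1] at hmem
    have hc : pr ((⟨pairMap ρ σ γ, pairMap_mem ρ σ γ⟩ : pairAlg ρ σ) :
        Matrix (Fin n) (Fin n) ℂ × Matrix (Fin n) (Fin n) ℂ) =
        (τ γ : Matrix (Fin n) (Fin n) ℂ) := hpr γ
    rw [hc] at hmem
    exact hmem
  obtain ⟨W', hW'inv, hcompl⟩ := hτ W hWinv
  have key : ∀ (mm : Matrix (Fin n) (Fin n) ℂ × Matrix (Fin n) (Fin n) ℂ),
      mm ∈ pairAlg ρ σ → ∀ x ∈ W', Matrix.mulVecLin (pr mm) x ∈ W' := by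
    intro mm hmm
    refine pairAlg_induction ρ σ
      (p := fun mm => ∀ x ∈ W', Matrix.mulVecLin (pr mm) x ∈ W') ?_ ?_ ?_ ?_ hmm
    · intro g x hx
      rw [hpr]
      exact hW'inv g ⟨x, hx, rfl⟩
    · intro x hx
      simpa [Matrix.mulVecLin_apply] using W'.zero_mem
    · intro x y hx hy z hz
      have : Matrix.mulVecLin (pr (x + y)) z =
          Matrix.mulVecLin (pr x) z + Matrix.mulVecLin (pr y) z := by
        simp [Matrix.mulVecLin_apply, Matrix.add_mulVec]
      rw [this]
      exact W'.add_mem (hx z hz) (hy z hz)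
    · intro c x hx z hz
      have : Matrix.mulVecLin (pr (c • x)) z = c • Matrix.mulVecLin (pr x) z := by
        simp [Matrix.mulVecLin_apply, Matrix.smul_mulVec]
      rw [this]
      exact W'.smul_mem c (hx z hz)
  let q : Submodule (pairAlg ρ σ) (actModC ρ σ φ).M :=
    { carrier := (W' : Set (Fin n → ℂ))
      add_mem' := fun ha hb => W'.add_mem ha hb
      zero_mem' := W'.zero_mem
      smul_mem' := fun a x hx => by
        show a • x ∈ W'
        rw [hsmul]
        exact key a.val a.2 x hx }
  refine ⟨q, ?_, ?_⟩
  · rw [Submodule.disjoint_def]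
    intro x hxp hxq
    exact Submodule.disjoint_def.mp hcompl.disjoint x hxp hxq
  · rw [codisjoint_iff, eq_top_iff]
    rintro x -
    have hx : x ∈ W ⊔ W' := by
      rw [codisjoint_iff.mp hcompl.codisjoint]
      trivial
    obtain ⟨y, hy, z, hz, rfl⟩ := (Submodule.mem_sup (p := W) (p' := W')).mp hx
    exact Submodule.add_mem _ (Submodule.mem_sup_left hy) (Submodule.mem_sup_right hz)

lemma chr_actModC (ρ σ : G →* GL (Fin n) ℂ)
    (φ : pairAlg ρ σ →ₐ[ℂ] Module.End ℂ (Fin n → ℂ))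
    (pr : (Matrix (Fin n) (Fin n) ℂ × Matrix (Fin n) (Fin n) ℂ) →ₗ[ℂ]
      Matrix (Fin n) (Fin n) ℂ)
    (hsmul : ∀ (a : pairAlg ρ σ) (x : (actModC ρ σ φ).M),
      a • x = Matrix.mulVecLin (pr a.val) x)
    (a : pairAlg ρ σ) :
    (actModC ρ σ φ).chr a = Matrix.trace (pr a.val) := by
  have hact : (actModC ρ σ φ).act a = Matrix.mulVecLin (pr a.val) := by
    ext x
    exact hsmul a x
  rw [ModC.chr, hact]
  show (LinearMap.trace ℂ (Fin n → ℂ)) (Matrix.mulVecLin (pr a.val)) = _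
  rw [LinearMap.trace_eq_matrix_trace ℂ (Pi.basisFun ℂ (Fin n)),
    LinearMap.toMatrix_eq_toMatrix', toMatrix'_mulVecLin]

/-- Two semisimple representations with equal traces are conjugate. -/
theorem conj_of_trace_eq (ρ σ : G →* GL (Fin n) ℂ)
    (hρ : ∀ W : Submodule ℂ (Fin n → ℂ),
      (∀ γ : G, W.map (Matrix.mulVecLin ((ρ γ : Matrix (Fin n) (Fin n) ℂ))) ≤ W) →
      ∃ W' : Submodule ℂ (Fin n → ℂ),
        (∀ γ : G, W'.map (Matrix.mulVecLin ((ρ γ : Matrix (Fin n) (Fin n) ℂ))) ≤ W') ∧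
        IsCompl W W')
    (hσ : ∀ W : Submodule ℂ (Fin n → ℂ),
      (∀ γ : G, W.map (Matrix.mulVecLin ((σ γ : Matrix (Fin n) (Fin n) ℂ))) ≤ W) →
      ∃ W' : Submodule ℂ (Fin n → ℂ),
        (∀ γ : G, W'.map (Matrix.mulVecLin ((σ γ : Matrix (Fin n) (Fin n) ℂ))) ≤ W') ∧
        IsCompl W W')
    (htr : ∀ γ : G, Matrix.trace ((ρ γ : Matrix (Fin n) (Fin n) ℂ)) =
      Matrix.trace ((σ γ : Matrix (Fin n) (Fin n) ℂ))) :
    ∃ T : GL (Fin n) ℂ, ∀ γ : G, σ γ = T * ρ γ * T⁻¹ := by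
  have hssV : IsSemisimpleModule (pairAlg ρ σ) (actModC ρ σ (actFst ρ σ)).M :=
    semisimple_actModC ρ σ ρ (actFst ρ σ) (LinearMap.fst ℂ _ _) (actFst_smul ρ σ)
      (fun g => rfl) hρ
  have hssW : IsSemisimpleModule (pairAlg ρ σ) (actModC ρ σ (actSnd ρ σ)).M :=
    semisimple_actModC ρ σ σ (actSnd ρ σ) (LinearMap.snd ℂ _ _) (actSnd_smul ρ σ)
      (fun g => rfl) hσ
  have hchr : ∀ a : pairAlg ρ σ, (actModC ρ σ (actFst ρ σ)).chr a =
      (actModC ρ σ (actSnd ρ σ)).chr a := by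
    intro a
    rw [chr_actModC ρ σ _ (LinearMap.fst ℂ _ _) (actFst_smul ρ σ),
      chr_actModC ρ σ _ (LinearMap.snd ℂ _ _) (actSnd_smul ρ σ)]
    exact pairAlg_induction ρ σ (p := fun mm => Matrix.trace mm.1 = Matrix.trace mm.2)
      htr (by simp) (fun x y hx hy => by simp [Matrix.trace_add, hx, hy])
      (fun c x hx => by simp [Matrix.trace_smul, hx]) a.2
  obtain ⟨e⟩ := ModC.iso_of_chr_eq _ _ hssV hssW hchr
  let ec : (Fin n → ℂ) ≃ₗ[ℂ] (Fin n → ℂ) := ModC.toCEquiv e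
  let Tm : Matrix (Fin n) (Fin n) ℂ := LinearMap.toMatrix' (ec : (Fin n → ℂ) →ₗ[ℂ] (Fin n → ℂ))
  let Tm' : Matrix (Fin n) (Fin n) ℂ :=
    LinearMap.toMatrix' (ec.symm : (Fin n → ℂ) →ₗ[ℂ] (Fin n → ℂ))
  have hTT' : Tm * Tm' = 1 := by
    rw [show Tm * Tm' = LinearMap.toMatrix'
        ((ec : (Fin n → ℂ) →ₗ[ℂ] (Fin n → ℂ)) ∘ₗ (ec.symm : (Fin n → ℂ) →ₗ[ℂ] (Fin n → ℂ)))
      from (LinearMap.toMatrix'_comp _ _).symm]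
    rw [show ((ec : (Fin n → ℂ) →ₗ[ℂ] (Fin n → ℂ)) ∘ₗ
        (ec.symm : (Fin n → ℂ) →ₗ[ℂ] (Fin n → ℂ))) = LinearMap.id from by
      ext x; simp]
    exact LinearMap.toMatrix'_id
  have hT'T : Tm' * Tm = 1 := by
    rw [show Tm' * Tm = LinearMap.toMatrix'
        ((ec.symm : (Fin n → ℂ) →ₗ[ℂ] (Fin n → ℂ)) ∘ₗ (ec : (Fin n → ℂ) →ₗ[ℂ] (Fin n → ℂ)))
      from (LinearMap.toMatrix'_comp _ _).symm]
    rw [show ((ec.symm : (Fin n → ℂ) →ₗ[ℂ] (Fin n → ℂ)) ∘ₗ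
        (ec : (Fin n → ℂ) →ₗ[ℂ] (Fin n → ℂ))) = LinearMap.id from by
      ext x; simp]
    exact LinearMap.toMatrix'_id
  refine ⟨⟨Tm, Tm', hTT', hT'T⟩, fun γ => ?_⟩
  have hint : (ec : (Fin n → ℂ) →ₗ[ℂ] (Fin n → ℂ)) ∘ₗ
      Matrix.mulVecLin ((ρ γ : Matrix (Fin n) (Fin n) ℂ)) =
      Matrix.mulVecLin ((σ γ : Matrix (Fin n) (Fin n) ℂ)) ∘ₗ
      (ec : (Fin n → ℂ) →ₗ[ℂ] (Fin n → ℂ)) := by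
    refine LinearMap.ext fun x => ?_
    have h1 := e.map_smul (⟨pairMap ρ σ γ, pairMap_mem ρ σ γ⟩ : pairAlg ρ σ) x
    rw [actFst_smul ρ σ _ x] at h1
    rw [actSnd_smul ρ σ _ (e x)] at h1
    exact h1
  have hmat : Tm * (ρ γ : Matrix (Fin n) (Fin n) ℂ) =
      (σ γ : Matrix (Fin n) (Fin n) ℂ) * Tm := by
    have h2 := congrArg LinearMap.toMatrix' hint
    rw [LinearMap.toMatrix'_comp, LinearMap.toMatrix'_comp, toMatrix'_mulVecLin,
      toMatrix'_mulVecLin] at h2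
    exact h2
  apply Units.ext
  show (σ γ : Matrix (Fin n) (Fin n) ℂ) = Tm * (ρ γ : Matrix (Fin n) (Fin n) ℂ) * Tm'
  calc (σ γ : Matrix (Fin n) (Fin n) ℂ)
      = (σ γ : Matrix (Fin n) (Fin n) ℂ) * (Tm * Tm') := by rw [hTT', mul_one]
    _ = ((σ γ : Matrix (Fin n) (Fin n) ℂ) * Tm) * Tm' := by rw [mul_assoc]
    _ = (Tm * (ρ γ : Matrix (Fin n) (Fin n) ℂ)) * Tm' := by rw [hmat]

end Application2


/-! ### The Hausdorff property of the moduli space -/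

noncomputable section Topo

open Matrix

lemma continuous_freeGroupLift {α : Type} {n : ℕ} (w : FreeGroup α) :
    Continuous fun F : α → GL (Fin n) ℂ => (FreeGroup.lift F : FreeGroup α →* GL (Fin n) ℂ) w := by
  induction w using FreeGroup.induction_on with
  | C1 =>
      simpa using continuous_const
  | of x =>
      have : (fun F : α → GL (Fin n) ℂ => (FreeGroup.lift F) (FreeGroup.of x)) =
          fun F => F x := by
        funext F
        simp
      show Continuous fun F : α → GL (Fin n) ℂ => (FreeGroup.lift F) (FreeGroup.of x)
      rw [this]
      exact continuous_apply x
  | inv_of x ih =>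
      have : (fun F : α → GL (Fin n) ℂ => (FreeGroup.lift F) (FreeGroup.of x)⁻¹) =
          fun F => ((FreeGroup.lift F) (FreeGroup.of x))⁻¹ := by
        funext F
        simp
      show Continuous fun F : α → GL (Fin n) ℂ => (FreeGroup.lift F) (FreeGroup.of x)⁻¹
      rw [this]
      exact ih.inv
  | mul x y ihx ihy =>
      have : (fun F : α → GL (Fin n) ℂ => (FreeGroup.lift F) (x * y)) =
          fun F => ((FreeGroup.lift F) x) * ((FreeGroup.lift F) y) := by
        funext F
        simp
      rw [this]
      exact ihx.mul ihy

lemma continuous_trace_matrix {n : ℕ} :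
    Continuous fun m : Matrix (Fin n) (Fin n) ℂ => Matrix.trace m := by
  refine continuous_finset_sum _ fun i _ => ?_
  exact (continuous_apply i).comp (continuous_apply i)

/-- The character function on the space of semisimple homomorphisms. -/
def charFn (g n : ℕ) (ρ : SemisimpleHomSpace g n) : SurfaceGamma g → ℂ :=
  fun γ => Matrix.trace ((ρ.1 γ : Matrix (Fin n) (Fin n) ℂ))

lemma rho_apply_eq (g n : ℕ) (ρ : SemisimpleHomSpace g n) (w : FreeGroup (SurfaceGen g)) :
    ρ.1 (PresentedGroup.mk (surfaceRels g) w) =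
      (FreeGroup.lift (fun s => ρ.1 (PresentedGroup.of s))) w := by
  have h : ρ.1.comp (PresentedGroup.mk (surfaceRels g)) =
      FreeGroup.lift (fun s => ρ.1 (PresentedGroup.of s)) := by
    apply FreeGroup.ext_hom
    intro a
    simp [PresentedGroup.of]
  exact (DFunLike.congr_fun h w :)

lemma continuous_charFn (g n : ℕ) : Continuous (charFn g n) := by
  refine continuous_pi fun γ => ?_
  obtain ⟨w, hw⟩ := PresentedGroup.mk_surjective (surfaceRels g) γ
  have hfun : (fun ρ : SemisimpleHomSpace g n =>
      Matrix.trace ((ρ.1 γ : Matrix (Fin n) (Fin n) ℂ))) =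
      (fun m : Matrix (Fin n) (Fin n) ℂ => Matrix.trace m) ∘
      (Units.val : GL (Fin n) ℂ → Matrix (Fin n) (Fin n) ℂ) ∘
      (fun F : SurfaceGen g → GL (Fin n) ℂ => (FreeGroup.lift F) w) ∘
      (fun ρ : SemisimpleHomSpace g n => fun s : SurfaceGen g => ρ.1 (PresentedGroup.of s)) := by
    funext ρ
    simp only [Function.comp_apply]
    rw [← rho_apply_eq g n ρ w, hw]
  show Continuous fun ρ : SemisimpleHomSpace g n =>
    Matrix.trace ((ρ.1 γ : Matrix (Fin n) (Fin n) ℂ))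
  rw [hfun]
  exact continuous_trace_matrix.comp (Units.continuous_val.comp
    ((continuous_freeGroupLift w).comp continuous_induced_dom))

lemma charFn_conj_invariant (g n : ℕ) (ρ σ : SemisimpleHomSpace g n)
    (h : semisimpleConjRel g n ρ σ) : charFn g n ρ = charFn g n σ := by
  obtain ⟨T, hT⟩ := h
  funext γ
  show Matrix.trace ((ρ.1 γ : Matrix (Fin n) (Fin n) ℂ)) =
    Matrix.trace ((σ.1 γ : Matrix (Fin n) (Fin n) ℂ))
  rw [hT γ]
  show _ = Matrix.trace (((T * ρ.1 γ * T⁻¹ : GL (Fin n) ℂ) : Matrix (Fin n) (Fin n) ℂ))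
  have : ((T * ρ.1 γ * T⁻¹ : GL (Fin n) ℂ) : Matrix (Fin n) (Fin n) ℂ) =
      (T : Matrix (Fin n) (Fin n) ℂ) * (ρ.1 γ : Matrix (Fin n) (Fin n) ℂ) *
      ((T⁻¹ : GL (Fin n) ℂ) : Matrix (Fin n) (Fin n) ℂ) := by
    simp [Units.val_mul]
  rw [this]
  exact (Matrix.trace_units_conj T _).symm

/-- The character map on the moduli space. -/
def charQuot (g n : ℕ) : RModuliAll g n → (SurfaceGamma g → ℂ) :=
  Quot.lift (charFn g n) (charFn_conj_invariant g n)

lemma charQuot_injective (g n : ℕ) : Function.Injective (charQuot g n) := by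
  intro x y
  induction x using Quot.ind with | _ ρ =>
  induction y using Quot.ind with | _ σ =>
  intro h
  have htr : ∀ γ : SurfaceGamma g,
      Matrix.trace ((ρ.1 γ : Matrix (Fin n) (Fin n) ℂ)) =
      Matrix.trace ((σ.1 γ : Matrix (Fin n) (Fin n) ℂ)) := fun γ => congrFun h γ
  obtain ⟨T, hT⟩ := conj_of_trace_eq ρ.1 σ.1 ρ.2 σ.2 htr
  exact Quot.sound ⟨T, hT⟩

theorem rModuliAll_t2Space' (g n : ℕ) : T2Space (RModuliAll g n) := by
  have hcont : Continuous (charQuot g n) :=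
    continuous_quot_lift _ (continuous_charFn g n)
  constructor
  intro x y hxy
  exact separated_by_continuous hcont fun h => hxy (charQuot_injective g n h)

end Topo


/-- Let `g ≥ 2`, `n ≥ 1`.  The moduli space `𝓡(Γ, GL(n,ℂ))` of semisimple representations
of `Γ` in `GL(n,ℂ)`, with the quotient topology, is Hausdorff. -/
theorem rModuliAll_t2Space (g n : ℕ) (hg : 2 ≤ g) (hn : 1 ≤ n) :
    T2Space (RModuliAll g n) := by
  exact rModuliAll_t2Space' g n
end

section
/- Let g ≥ 2 and let p ≠ q be positive integers, and let a, b be integers with qa < pb (equivalently, τ < 0). Define, as rational numbers: τ = 2(qa − pb)/(p + q), μ₁ = (a + p(2g−2))/p, μ₂ = b/q, α_m = μ₁ − μ₂, and α_M = (1 + (p+q)/|p−q|)·(μ₁ − μ₂). Then |τ| ≤ min{p,q}·(2g−2) holds if and only if 0 < α_m ≤ 2g−2 ≤ α_M. -/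
/-! The bound `|τ| ≤ min{p,q}(2g−2)` is the last inequality `2g−2 ≤ α_M` in disguise: both say
`2(pb − qa) ≤ min{p,q}(p+q)(2g−2)`, because `1 + (p+q)/|p−q| = 2 max{p,q}/|p−q|`. Given `τ < 0`,
the middle inequality is automatic, and the first one follows from the bound since
`min{p,q}(p+q) < 2pq` when `p ≠ q`. -/

section

variable {𝕜 : Type*} [Field 𝕜] [LinearOrder 𝕜] [IsStrictOrderedRing 𝕜] {m M D K : 𝕜}

lemma le_one_add_div_mul_sub_div_iff (hm : 0 < m) (hmM : m < M) :
    K ≤ (1 + (m + M) / (M - m)) * (K - D / (m * M)) ↔ 2 * D / (m + M) ≤ m * K := by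
  have hM : 0 < M := hm.trans hmM
  have hgap : 0 < M - m := sub_pos.2 hmM
  have key : (1 + (m + M) / (M - m)) * (K - D / (m * M)) - K
      = (m + M) / (m * (M - m)) * (m * K - 2 * D / (m + M)) := by
    field_simp
    ring
  rw [← sub_nonneg, key, mul_nonneg_iff_of_pos_left (by positivity), sub_nonneg]

lemma div_mul_lt_of_two_mul_div_add_le (hm : 0 < m) (hmM : m < M) (hD : 0 < D)
    (h : 2 * D / (m + M) ≤ m * K) : D / (m * M) < K := by
  have hM : 0 < M := hm.trans hmM
  have hmK : 0 < m * K := (by positivity : 0 < 2 * D / (m + M)).trans_le h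
  rw [div_le_iff₀ (by positivity)] at h
  rw [div_lt_iff₀ (by positivity)]
  nlinarith

lemma two_mul_div_add_le_iff (hm : 0 < m) (hmM : m < M) (hD : 0 < D) :
    2 * D / (m + M) ≤ m * K ↔
      0 < K - D / (m * M) ∧ K - D / (m * M) ≤ K ∧
        K ≤ (1 + (m + M) / (M - m)) * (K - D / (m * M)) := by
  have hM : 0 < M := hm.trans hmM
  rw [le_one_add_div_mul_sub_div_iff hm hmM]
  refine ⟨fun h ↦ ⟨?_, sub_le_self _ (by positivity), h⟩, fun h ↦ h.2.2⟩
  exact sub_pos.2 (div_mul_lt_of_two_mul_div_add_le hm hmM hD h)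

end

theorem toledo_range_iff_alpha_range_general (g p q : ℕ) (a b : ℤ)
    (hp : 0 < p) (hq : 0 < q) (hpq : p ≠ q)
    (htau : (q : ℤ) * a < (p : ℤ) * b) :
    (|2 * ((q : ℚ) * a - (p : ℚ) * b) / ((p : ℚ) + q)| ≤ (min p q : ℚ) * (2 * g - 2)) ↔
      (0 < ((a : ℚ) + p * (2 * g - 2)) / p - (b : ℚ) / q ∧
        ((a : ℚ) + p * (2 * g - 2)) / p - (b : ℚ) / q ≤ 2 * g - 2 ∧
        2 * (g : ℚ) - 2 ≤
          (1 + ((p : ℚ) + q) / |(p : ℚ) - q|) *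
            (((a : ℚ) + p * (2 * g - 2)) / p - (b : ℚ) / q)) := by
  have hP : (0 : ℚ) < p := by exact_mod_cast hp
  have hQ : (0 : ℚ) < q := by exact_mod_cast hq
  have hD : (0 : ℚ) < p * b - q * a := sub_pos.2 (by exact_mod_cast htau)
  have hτ : |2 * ((q : ℚ) * a - p * b) / (p + q)| = 2 * (p * b - q * a) / (p + q) := by
    rw [abs_div, abs_mul, abs_two, abs_sub_comm, abs_of_pos hD, abs_of_pos (by positivity)]
  have hα :
      ((a : ℚ) + p * (2 * g - 2)) / p - b / q = (2 * g - 2) - (p * b - q * a) / (p * q) := by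
    field_simp
    ring
  rw [hτ, hα, ← min_add_max (p : ℚ) q, ← min_mul_max (p : ℚ) q,
    ← max_sub_min_eq_abs' (p : ℚ) q]
  exact two_mul_div_add_le_iff (lt_min hP hQ) (min_lt_max.2 (by exact_mod_cast hpq)) hD

/-- Let `g ≥ 2`, `p ≠ q` positive integers, `a, b` integers with `qa < pb` (i.e. `τ < 0`).
With `τ = 2(qa − pb)/(p + q)`, `μ₁ = (a + p(2g−2))/p`, `μ₂ = b/q`, `α_m = μ₁ − μ₂` and
`α_M = (1 + (p+q)/|p−q|)(μ₁ − μ₂)` (as rational numbers), we have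
`|τ| ≤ min{p,q}(2g−2)` if and only if `0 < α_m ≤ 2g−2 ≤ α_M`. -/
theorem toledo_range_iff_alpha_range (g p q : ℕ) (a b : ℤ)
    (hg : 2 ≤ g) (hp : 0 < p) (hq : 0 < q) (hpq : p ≠ q)
    (htau : (q : ℤ) * a < (p : ℤ) * b) :
    (|2 * ((q : ℚ) * a - (p : ℚ) * b) / ((p : ℚ) + q)| ≤ (min p q : ℚ) * (2 * g - 2)) ↔
      (0 < ((a : ℚ) + p * (2 * g - 2)) / p - (b : ℚ) / q ∧
        ((a : ℚ) + p * (2 * g - 2)) / p - (b : ℚ) / q ≤ 2 * g - 2 ∧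
        2 * (g : ℚ) - 2 ≤
          (1 + ((p : ℚ) + q) / |(p : ℚ) - q|) *
            (((a : ℚ) + p * (2 * g - 2)) / p - (b : ℚ) / q)) :=
  toledo_range_iff_alpha_range_general g p q a b hp hq hpq htau
end
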